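/- arXiv:1011.2010 — 2 statements merged into one kernel-verified Lean document; each statement's English description precedes it below -/
import Mathlib

section
/- If φ satisfies φ(v,w) = ν(φ(w,v)) for all v, w ∈ V, then the k-linear map on 𝔸(V,B,φ) sending v ⊗ b ⊗ w to w ⊗ ν(b) ⊗ v is a k-involution, i.e. a k-linear anti-automorphism whose square is the identity. -/
open scoped TensorProduct

namespace TensorProduct

variable {R M N P M' N' P' Q : Type*} [CommSemiring R]
  [AddCommMonoid M] [AddCommMonoid N] [AddCommMonoid P] [AddCommMonoid M'] [AddCommMonoid N']
  [AddCommMonoid P'] [AddCommMonoid Q] [Module R M] [Module R N] [Module R P] [Module R M']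
  [Module R N'] [Module R P'] [Module R Q]

theorem ext_bilinear_threefold' {f g : M ⊗[R] (N ⊗[R] P) →ₗ[R] M' ⊗[R] (N' ⊗[R] P') →ₗ[R] Q}
    (H : ∀ m n p m' n' p', f (m ⊗ₜ (n ⊗ₜ p)) (m' ⊗ₜ (n' ⊗ₜ p'))
      = g (m ⊗ₜ (n ⊗ₜ p)) (m' ⊗ₜ (n' ⊗ₜ p'))) :
    f = g :=
  ext_threefold' fun m n p => ext_threefold' fun m' n' p' => H m n p m' n' p'

end TensorProduct

theorem stmt1_general (k B V : Type*) [CommRing k] [CommRing B] [Algebra k B]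
    [AddCommGroup V] [Module k V]
    (ν : B ≃ₐ[k] B) (hν : ∀ b, ν (ν b) = b)
    (φ : V →ₗ[k] V →ₗ[k] B)
    (hφ : ∀ v w, φ v w = ν (φ w v))
    (mul : (V ⊗[k] (B ⊗[k] V)) →ₗ[k] (V ⊗[k] (B ⊗[k] V)) →ₗ[k] (V ⊗[k] (B ⊗[k] V)))
    (hmul : ∀ (v₁ v₂ w₁ w₂ : V) (b₁ b₂ : B),
      mul (v₁ ⊗ₜ[k] (b₁ ⊗ₜ[k] w₁)) (v₂ ⊗ₜ[k] (b₂ ⊗ₜ[k] w₂))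
        = v₁ ⊗ₜ[k] ((b₁ * φ w₁ v₂ * b₂) ⊗ₜ[k] w₂))
    (ι : (V ⊗[k] (B ⊗[k] V)) →ₗ[k] (V ⊗[k] (B ⊗[k] V)))
    (hι : ∀ (v w : V) (b : B), ι (v ⊗ₜ[k] (b ⊗ₜ[k] w)) = w ⊗ₜ[k] ((ν b) ⊗ₜ[k] v)) :
    (∀ x y, ι (mul x y) = mul (ι y) (ι x)) ∧ (∀ x, ι (ι x) = x) ∧ Function.Bijective ι := by
  have hinv : ι ∘ₗ ι = LinearMap.id :=
    TensorProduct.ext_threefold' fun v b w => by simp [hι, hν]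
  have hanti : mul.compr₂ ι = mul.flip.compl₁₂ ι ι := by
    refine TensorProduct.ext_bilinear_threefold' fun v₁ b₁ w₁ v₂ b₂ w₂ => ?_
    have hB : ν (b₁ * φ w₁ v₂ * b₂) = ν b₂ * φ v₂ w₁ * ν b₁ := by
      rw [map_mul, map_mul, hφ v₂ w₁]
      ring
    simp [hmul, hι, hB]
  have hinv' : ∀ x, ι (ι x) = x := LinearMap.congr_fun hinv
  exact ⟨fun x y => LinearMap.congr_fun₂ hanti x y, hinv',
    Function.bijective_iff_has_inverse.mpr ⟨ι, hinv', hinv'⟩⟩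

/-- if `φ(v,w) = ν(φ(w,v))`, then the `k`-linear map on `𝔸(V,B,φ)` sending
`v ⊗ b ⊗ w` to `w ⊗ ν(b) ⊗ v` is a `k`-involution, i.e. a `k`-linear anti-automorphism
whose square is the identity. -/
theorem stmt1 (k B V : Type*) [CommRing k] [CommRing B] [Algebra k B]
    [AddCommGroup V] [Module k V] [Module.Free k V] [Module.Finite k V]
    (ν : B ≃ₐ[k] B) (hν : ∀ b, ν (ν b) = b)
    (φ : V →ₗ[k] V →ₗ[k] B)
    (hφ : ∀ v w, φ v w = ν (φ w v))
    (mul : (V ⊗[k] (B ⊗[k] V)) →ₗ[k] (V ⊗[k] (B ⊗[k] V)) →ₗ[k] (V ⊗[k] (B ⊗[k] V)))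
    (hmul : ∀ (v₁ v₂ w₁ w₂ : V) (b₁ b₂ : B),
      mul (v₁ ⊗ₜ[k] (b₁ ⊗ₜ[k] w₁)) (v₂ ⊗ₜ[k] (b₂ ⊗ₜ[k] w₂))
        = v₁ ⊗ₜ[k] ((b₁ * φ w₁ v₂ * b₂) ⊗ₜ[k] w₂))
    (ι : (V ⊗[k] (B ⊗[k] V)) →ₗ[k] (V ⊗[k] (B ⊗[k] V)))
    (hι : ∀ (v w : V) (b : B), ι (v ⊗ₜ[k] (b ⊗ₜ[k] w)) = w ⊗ₜ[k] ((ν b) ⊗ₜ[k] v)) :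
    (∀ x y, ι (mul x y) = mul (ι y) (ι x)) ∧ (∀ x, ι (ι x) = x) ∧ Function.Bijective ι :=
  stmt1_general k B V ν hν φ hφ mul hmul ι hι
end

section
/- Let U ⊆ W and {X_u | u ∈ U} satisfy conditions I1–I4 (e ∈ X_u; ℓ(xu) = ℓ(x)+ℓ(u) for x ∈ X_u; the sets X_u u are pairwise disjoint; and M = ⟨T_x C_u | u ∈ U, x ∈ X_u⟩_A is a left ideal of H). Then the set B = {T_x C_u | u ∈ U, x ∈ X_u} is an A-basis of M. -/
/-!
`T_x C_u` is `(1 + P_{u,u}) T_{xu}` plus a combination of `T_z` with `ℓ(z) < ℓ(xu)`: since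
`T_x T_y = T_{xy}` when lengths add, it suffices to see this for `C_u`, where it follows from the
bar invariance of `C_u` and `P_{z,u} ∈ v⁻¹ℤ[v⁻¹]`. The leading coefficient `1 + P_{u,u}` is nonzero,
and by I3 the leading indices `xu` are pairwise distinct, so the `T_x C_u` are triangular with
respect to length in the basis `{T_w}`, hence linearly independent; they span `M` by definition.
-/

open LaurentPolynomial

noncomputable section

/-- The ground ring `𝒜 = ℂ[v,v⁻¹]`. -/
abbrev 𝒜 : Type := LaurentPolynomial ℂ

/-- The subset `v⁻¹ℤ[v⁻¹]` of `𝒜 = ℂ[v,v⁻¹]`: Laurent polynomials with integer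
coefficients supported in strictly negative degrees. -/
def Alt0 (f : 𝒜) : Prop :=
  ∀ n : ℤ, f.coeff n ≠ 0 → n < 0 ∧ ∃ m : ℤ, f.coeff n = (m : ℂ)

variable {B₀ : Type*} {W : Type*} [Group W] {M : CoxeterMatrix B₀}
variable {H : Type*}

/-- `L` is a positive weight function on the Coxeter system `cs`. -/
def IsWeight (cs : CoxeterSystem M W) (L : W → ℕ) : Prop :=
  (∀ w w' : W, cs.length (w * w') = cs.length w + cs.length w' →
      L (w * w') = L w + L w') ∧
  (∀ i : B₀, 0 < L (cs.simple i))

variable [Ring H] [Algebra 𝒜 H]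

/-- The defining multiplication rule of the Iwahori–Hecke algebra on its standard
basis `Tb`, with respect to the weight function `L`:
`T_s T_w = T_{sw}` if `ℓ(sw) > ℓ(w)` and
`T_s T_w = T_{sw} + (v^{L(s)} - v^{-L(s)}) T_w` if `ℓ(sw) < ℓ(w)`. -/
def HeckeMul (cs : CoxeterSystem M W) (Tb : Module.Basis W 𝒜 H) (L : W → ℕ) : Prop :=
  ∀ (i : B₀) (w : W),
    (cs.length (cs.simple i * w) > cs.length w →
      Tb (cs.simple i) * Tb w = Tb (cs.simple i * w)) ∧
    (cs.length (cs.simple i * w) < cs.length w →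
      Tb (cs.simple i) * Tb w = Tb (cs.simple i * w) +
        ((LaurentPolynomial.T (L (cs.simple i) : ℤ)
          - LaurentPolynomial.T (-(L (cs.simple i) : ℤ)) : 𝒜)) • Tb w)

/-- `bar` is the bar involution of the Hecke algebra: it is additive, multiplicative,
semilinear over `v ↦ v⁻¹` and sends `T_w` to `T_{w⁻¹}⁻¹`. -/
def IsBar (Tb : Module.Basis W 𝒜 H) (bar : H → H) : Prop :=
  (∀ x y, bar (x + y) = bar x + bar y) ∧
  (∀ x y, bar (x * y) = bar x * bar y) ∧
  (∀ (a : 𝒜) (x : H), bar (a • x) = (LaurentPolynomial.invert a) • bar x) ∧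
  (∀ w : W, bar (Tb w) * Tb w⁻¹ = 1 ∧ Tb w⁻¹ * bar (Tb w) = 1)

/-- `Cb` is the Kazhdan–Lusztig basis with KL polynomials `P`:
`C_w = T_w + Σ_y P_{y,w} T_y` with `P_{y,w} ∈ v⁻¹ℤ[v⁻¹]`, and each `C_w` is fixed by
the bar involution. -/
def IsKL (Tb Cb : Module.Basis W 𝒜 H) (P : W → W → 𝒜) (bar : H → H) : Prop :=
  (∀ w, (Function.support fun y => P y w).Finite) ∧
  (∀ w, Cb w = Tb w + ∑ᶠ y, P y w • Tb y) ∧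
  (∀ y w, Alt0 (P y w)) ∧
  (∀ w, bar (Cb w) = Cb w)

/-- The structure constants `h_{x,y,z}` of the Kazhdan–Lusztig basis:
`C_x C_y = Σ_z h_{x,y,z} C_z`. -/
def klh (Cb : Module.Basis W 𝒜 H) (x y z : W) : 𝒜 := Cb.repr (Cb x * Cb y) z

/-- The Kazhdan–Lusztig left preorder `x ≤_L y`. -/
def leftLe (cs : CoxeterSystem M W) (Cb : Module.Basis W 𝒜 H) (x y : W) : Prop :=
  Relation.ReflTransGen (fun b a => ∃ i : B₀, klh Cb (cs.simple i) b a ≠ 0) y x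

/-- The Kazhdan–Lusztig right preorder `x ≤_R y`. -/
def rightLe (cs : CoxeterSystem M W) (Cb : Module.Basis W 𝒜 H) (x y : W) : Prop :=
  Relation.ReflTransGen (fun b a => ∃ i : B₀, klh Cb b (cs.simple i) a ≠ 0) y x

/-- The Kazhdan–Lusztig two-sided preorder `x ≤_LR y`. -/
def lrLe (cs : CoxeterSystem M W) (Cb : Module.Basis W 𝒜 H) (x y : W) : Prop :=
  Relation.ReflTransGen (fun b a =>
    (∃ i : B₀, klh Cb (cs.simple i) b a ≠ 0) ∨ (∃ i : B₀, klh Cb b (cs.simple i) a ≠ 0)) y x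

/-- `flat` is the `𝒜`-linear anti-automorphism `♭` with `T_w ↦ T_{w⁻¹}`. -/
def IsFlat (Tb : Module.Basis W 𝒜 H) (flat : H →ₗ[𝒜] H) : Prop :=
  (∀ x y, flat (x * y) = flat y * flat x) ∧ (∀ w, flat (Tb w) = Tb w⁻¹)

/-- The Bruhat order (strict) on a Coxeter group: the transitive closure of
`u < tu` for reflections `t` with `ℓ(u) < ℓ(tu)`. -/
def bruhatLt (cs : CoxeterSystem M W) (x y : W) : Prop :=
  Relation.TransGen
    (fun a b => cs.length a < cs.length b ∧ ∃ t, cs.IsReflection t ∧ b = t * a) x y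

section BasisRepr

variable {ι κ R N α : Type*} [Ring R] [AddCommGroup N] [Module R N] [LinearOrder α]

lemma Module.Basis.repr_self_add_finsum_smul (b : Module.Basis κ R N) (k : κ) {p : κ → R}
    (hp : p.support.Finite) (j : κ) :
    b.repr (b k + ∑ᶠ i, p i • b i) j = Finsupp.single k 1 j + p j := by
  classical
  rw [finsum_eq_sum_of_support_subset _ (s := hp.toFinset)
    (by simpa using Function.support_smul_subset_left p b)]
  simp only [map_add, map_sum, map_smul, b.repr_self]
  simp [Finsupp.single_apply]
  exact Eq.symm

theorem Module.Basis.linearIndependent_of_triangular [NoZeroDivisors R] (b : Module.Basis κ R N)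
    (deg : κ → α)
    {v : ι → N} {g : ι → κ} (hg : Function.Injective g)
    (hlead : ∀ i, ∃ c : R, c ≠ 0 ∧
      v i - c • b (g i) ∈ Submodule.span R (b '' {k | deg k < deg (g i)})) :
    LinearIndependent R v := by
  classical
  choose c hc0 hlow using hlead
  have hcoeff : ∀ i k, deg (g i) ≤ deg k → b.repr (v i) k = if g i = k then c i else 0 := by
    intro i k hk
    have : b.repr (v i - c i • b (g i)) k = 0 :=
      Finsupp.notMem_support_iff.mp fun hmem => not_lt.mpr hk (b.mem_span_image.mp (hlow i) hmem)
    rwa [map_sub, Finsupp.sub_apply, sub_eq_zero, map_smul, b.repr_self, Finsupp.smul_apply,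
      Finsupp.single_apply, smul_ite, smul_eq_mul, mul_one, smul_zero] at this
  rw [linearIndependent_iff]
  intro l hl
  by_contra hne
  obtain ⟨i₀, hi₀, hmax⟩ :=
    l.support.exists_max_image (deg ∘ g) (Finsupp.support_nonempty_iff.mpr hne)
  have hrepr : b.repr (Finsupp.linearCombination R v l) (g i₀) = l i₀ * c i₀ := by
    rw [Finsupp.linearCombination_apply, Finsupp.sum, map_sum, Finsupp.finsetSum_apply,
      Finset.sum_eq_single_of_mem i₀ hi₀]
    · rw [map_smul, Finsupp.smul_apply, hcoeff i₀ _ le_rfl, if_pos rfl, smul_eq_mul]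
    · intro i hi hii₀
      rw [map_smul, Finsupp.smul_apply, hcoeff i _ (hmax i hi), if_neg (hg.ne hii₀), smul_zero]
  rw [hl, map_zero, Finsupp.zero_apply, eq_comm, mul_eq_zero] at hrepr
  exact hrepr.elim (Finsupp.mem_support_iff.mp hi₀) (hc0 i₀)

end BasisRepr

lemma Alt0.one_add_ne_zero {f : 𝒜} (hf : Alt0 f) : 1 + f ≠ 0 := by
  have hf0 : f.coeff 0 = 0 := by_contra fun h => (hf 0 h).1.false
  intro h
  simpa [hf0] using congrArg (fun g : 𝒜 => g.coeff 0) h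

lemma Alt0.eq_zero_of_invert_eq {f : 𝒜} (hf : Alt0 f) (hinv : invert f = f) : f = 0 := by
  ext n
  by_contra hn
  have hneg : f.coeff (-n) ≠ 0 := by rwa [← invert_apply, hinv]
  have := (hf n hn).1
  have := (hf (-n) hneg).1
  omega

lemma CoxeterSystem.eq_one_of_isEmpty [IsEmpty B₀] (cs : CoxeterSystem M W) (w : W) : w = 1 := by
  by_contra hw
  obtain ⟨i, -⟩ := cs.exists_leftDescent_of_ne_one hw
  exact isEmptyElim i

section Hecke

variable {cs : CoxeterSystem M W} {L : W → ℕ} {Tb Cb : Module.Basis W 𝒜 H} {bar : H → H}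
  {P : W → W → 𝒜}

def lowerSpan (cs : CoxeterSystem M W) (Tb : Module.Basis W 𝒜 H) (n : ℕ) : Submodule 𝒜 H :=
  Submodule.span 𝒜 (Tb '' {z | cs.length z < n})

lemma Tb_mem_lowerSpan {z : W} {n : ℕ} (hz : cs.length z < n) : Tb z ∈ lowerSpan cs Tb n :=
  Submodule.subset_span ⟨z, hz, rfl⟩

lemma lowerSpan_mono {m n : ℕ} (hmn : m ≤ n) : lowerSpan cs Tb m ≤ lowerSpan cs Tb n :=
  Submodule.span_mono (Set.image_mono fun _ hz => lt_of_lt_of_le hz hmn)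

lemma mem_lowerSpan_iff {h : H} {n : ℕ} :
    h ∈ lowerSpan cs Tb n ↔ ∀ z, n ≤ cs.length z → Tb.repr h z = 0 := by
  rw [lowerSpan, Tb.mem_span_image]
  refine ⟨fun hsub z hz => Finsupp.notMem_support_iff.mp fun hmem => not_lt.mpr hz (hsub hmem),
    fun h z hz => not_le.mp fun hle => Finsupp.mem_support_iff.mp hz (h z hle)⟩

lemma isLeftRegular_Tb (hbar : IsBar Tb bar) (x : W) : IsLeftRegular (Tb x) := by
  intro h h' hh
  have hinv := (hbar.2.2.2 x⁻¹).1
  rw [inv_inv] at hinv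
  simpa only [← mul_assoc, hinv, one_mul] using congrArg (bar (Tb x⁻¹) * ·) hh

lemma Tb_one [Nonempty B₀] (hmul : HeckeMul cs Tb L) (hbar : IsBar Tb bar) : Tb 1 = (1 : H) := by
  obtain ⟨i⟩ := ‹Nonempty B₀›
  apply isLeftRegular_Tb hbar (cs.simple i)
  have := (hmul i 1).1 (by simp [cs.length_simple])
  simpa only [mul_one] using this

lemma exists_Tb_eq_Tb_simple_mul (hmul : HeckeMul cs Tb L) {x : W} (hx : x ≠ 1) :
    ∃ (i : B₀) (x' : W), cs.length x' + 1 = cs.length x ∧ x = cs.simple i * x' ∧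
      Tb x = Tb (cs.simple i) * Tb x' := by
  obtain ⟨i, hi⟩ := cs.exists_leftDescent_of_ne_one hx
  rw [cs.isLeftDescent_iff] at hi
  refine ⟨i, cs.simple i * x, hi, (cs.simple_mul_simple_cancel_left i).symm, ?_⟩
  have := (hmul i (cs.simple i * x)).1 (by rw [cs.simple_mul_simple_cancel_left]; omega)
  rwa [cs.simple_mul_simple_cancel_left, eq_comm] at this

lemma Tb_simple_mul_mem_lowerSpan (hmul : HeckeMul cs Tb L) (i : B₀) {h : H} {n : ℕ}
    (hh : h ∈ lowerSpan cs Tb n) : Tb (cs.simple i) * h ∈ lowerSpan cs Tb (n + 1) := by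
  induction hh using Submodule.span_induction with
  | mem x hx =>
    obtain ⟨w, hw, rfl⟩ := hx
    have hw : cs.length w < n := hw
    rcases cs.length_simple_mul w i with hlt | hgt
    · rw [(hmul i w).1 (by omega)]
      exact Tb_mem_lowerSpan (by omega)
    · rw [(hmul i w).2 (by omega)]
      exact add_mem (Tb_mem_lowerSpan (by omega))
        (Submodule.smul_mem _ _ (Tb_mem_lowerSpan (by omega)))
  | zero => simp
  | add x y _ _ hx hy => rw [mul_add]; exact add_mem hx hy
  | smul a x _ hx => rw [mul_smul_comm]; exact Submodule.smul_mem _ _ hx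

lemma Tb_mul_mem_lowerSpan [Nonempty B₀] (hmul : HeckeMul cs Tb L) (hbar : IsBar Tb bar) (x : W)
    {h : H} {n : ℕ} (hh : h ∈ lowerSpan cs Tb n) :
    Tb x * h ∈ lowerSpan cs Tb (n + cs.length x) := by
  induction hx : cs.length x using Nat.strong_induction_on generalizing x with
  | _ m ih =>
    rcases eq_or_ne x 1 with rfl | hx1
    · rwa [← hx, cs.length_one, add_zero, Tb_one hmul hbar, one_mul]
    · obtain ⟨i, x', hlen, rfl, hT⟩ := exists_Tb_eq_Tb_simple_mul hmul hx1
      rw [hT, mul_assoc, ← hx, ← hlen, ← add_assoc]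
      exact Tb_simple_mul_mem_lowerSpan hmul i (ih _ (by omega) x' rfl)

lemma Tb_mul_Tb [Nonempty B₀] (hmul : HeckeMul cs Tb L) (hbar : IsBar Tb bar) {x y : W}
    (hxy : cs.length (x * y) = cs.length x + cs.length y) : Tb x * Tb y = Tb (x * y) := by
  induction hx : cs.length x using Nat.strong_induction_on generalizing x with
  | _ n ih =>
    rcases eq_or_ne x 1 with rfl | hx1
    · rw [Tb_one hmul hbar, one_mul, one_mul]
    · obtain ⟨i, x', hlen, rfl, hT⟩ := exists_Tb_eq_Tb_simple_mul hmul hx1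
      rw [mul_assoc] at hxy
      have h1 := cs.length_mul_le x' y
      have h2 := cs.length_mul_le (cs.simple i) (x' * y)
      rw [cs.length_simple] at h2
      rw [hT, mul_assoc, ih _ (by omega) (by omega) rfl, (hmul i (x' * y)).1 (by omega),
        mul_assoc]

lemma bar_Tb_simple (hmul : HeckeMul cs Tb L) (hbar : IsBar Tb bar) (i : B₀) :
    bar (Tb (cs.simple i)) = Tb (cs.simple i) -
      (T (L (cs.simple i) : ℤ) - T (-(L (cs.simple i) : ℤ)) : 𝒜) • (1 : H) := by
  have : Nonempty B₀ := ⟨i⟩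
  set s := cs.simple i
  set ξ : 𝒜 := T (L s : ℤ) - T (-(L s : ℤ))
  have hsq : Tb s * Tb s = 1 + ξ • Tb s := by
    have := (hmul i s).2 (by simp [s, cs.length_simple])
    rwa [cs.simple_mul_simple_self, Tb_one hmul hbar] at this
  have hbs : bar (Tb s) * Tb s = 1 := by simpa [s, cs.inv_simple] using (hbar.2.2.2 s).1
  calc bar (Tb s) = bar (Tb s) * (Tb s * Tb s) - bar (Tb s) * ξ • Tb s := by
        rw [hsq, mul_add, mul_one, add_sub_cancel_right]
    _ = Tb s - ξ • (1 : H) := by rw [← mul_assoc, hbs, one_mul, mul_smul_comm, hbs]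

lemma bar_Tb_sub_mem_lowerSpan [Nonempty B₀] (hmul : HeckeMul cs Tb L) (hbar : IsBar Tb bar)
    (y : W) : bar (Tb y) - Tb y ∈ lowerSpan cs Tb (cs.length y) := by
  induction hy : cs.length y using Nat.strong_induction_on generalizing y with
  | _ n ih =>
    rcases eq_or_ne y 1 with rfl | hy1
    · have h1 := (hbar.2.2.2 1).1
      rw [inv_one, Tb_one hmul hbar, mul_one] at h1
      rw [Tb_one hmul hbar, h1, sub_self]
      exact zero_mem _
    · obtain ⟨i, y', hlen, rfl, hT⟩ := exists_Tb_eq_Tb_simple_mul hmul hy1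
      set ξ : 𝒜 := T (L (cs.simple i) : ℤ) - T (-(L (cs.simple i) : ℤ))
      have hr := ih _ (by omega) y' rfl
      have hbar_y' : bar (Tb y') ∈ lowerSpan cs Tb n := by
        rw [← sub_add_cancel (bar (Tb y')) (Tb y')]
        exact add_mem (lowerSpan_mono (by omega) hr) (Tb_mem_lowerSpan (by omega))
      have hexpand : bar (Tb (cs.simple i * y')) - Tb (cs.simple i * y') =
          Tb (cs.simple i) * (bar (Tb y') - Tb y') - ξ • bar (Tb y') := by
        rw [hT, hbar.2.1, bar_Tb_simple hmul hbar i, sub_mul, smul_mul_assoc, one_mul, mul_sub]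
        abel
      rw [hexpand]
      refine sub_mem ?_ (Submodule.smul_mem _ _ hbar_y')
      rw [← hy, ← hlen]
      exact Tb_simple_mul_mem_lowerSpan hmul i hr

lemma repr_bar_eq_invert [Nonempty B₀] (hmul : HeckeMul cs Tb L) (hbar : IsBar Tb bar)
    {h : H} {z₀ : W} (hmax : ∀ z, Tb.repr h z ≠ 0 → cs.length z ≤ cs.length z₀) :
    Tb.repr (bar h) z₀ = invert (Tb.repr h z₀) := by
  classical
  let barAdd : H →+ H := AddMonoidHom.mk' bar hbar.1
  have hbarT : ∀ z ∈ (Tb.repr h).support,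
      Tb.repr (bar (Tb z)) z₀ = if z = z₀ then 1 else 0 := by
    intro z hz
    have := mem_lowerSpan_iff.mp (bar_Tb_sub_mem_lowerSpan hmul hbar z) z₀
      (hmax z (Finsupp.mem_support_iff.mp hz))
    rwa [map_sub, Finsupp.sub_apply, sub_eq_zero, Tb.repr_self, Finsupp.single_apply] at this
  calc Tb.repr (bar h) z₀
      = Tb.repr (barAdd (∑ z ∈ (Tb.repr h).support, Tb.repr h z • Tb z)) z₀ := by
        conv_lhs => rw [← Tb.linearCombination_repr h]
        rw [Finsupp.linearCombination_apply, Finsupp.sum]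
        rfl
    _ = ∑ z ∈ (Tb.repr h).support, invert (Tb.repr h z) * Tb.repr (bar (Tb z)) z₀ := by
        simp [barAdd, hbar.2.2.1]
    _ = ∑ z ∈ (Tb.repr h).support, if z = z₀ then invert (Tb.repr h z) else 0 := by
        refine Finset.sum_congr rfl fun z hz => ?_
        rw [hbarT z hz, mul_ite, mul_one, mul_zero]
    _ = invert (Tb.repr h z₀) := by
        rw [Finset.sum_ite_eq']
        split_ifs with hz₀
        · rfl
        · rw [Finsupp.notMem_support_iff.mp hz₀, map_zero]

/-- By bar invariance of `C_u`, its coefficient at any `z` of maximal length is fixed by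
`v ↦ v⁻¹`, which no nonzero element of `v⁻¹ℤ[v⁻¹]` is; so the only such `z` is `u`. -/
lemma P_eq_zero_of_length_le [Nonempty B₀] (hmul : HeckeMul cs Tb L) (hbar : IsBar Tb bar)
    (hKL : IsKL Tb Cb P bar) {u z : W} (hzu : z ≠ u) (hle : cs.length u ≤ cs.length z) :
    P z u = 0 := by
  have hcP : ∀ y, y ≠ u → Tb.repr (Cb u) y = P y u := fun y hy => by
    rw [hKL.2.1 u, Tb.repr_self_add_finsum_smul u (hKL.1 u), Finsupp.single_eq_of_ne hy,
      zero_add]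
  set c := Tb.repr (Cb u)
  have hmax_eq :
      ∀ z₀ ∈ c.support, (∀ y ∈ c.support, cs.length y ≤ cs.length z₀) → z₀ = u := by
    intro z₀ hz₀ hmax
    by_contra hne
    have hfix : invert (c z₀) = c z₀ := by
      rw [← repr_bar_eq_invert hmul hbar fun y hy => hmax y (Finsupp.mem_support_iff.mpr hy),
        hKL.2.2.2 u]
    rw [hcP z₀ hne] at hfix
    rw [Finsupp.mem_support_iff, hcP z₀ hne] at hz₀
    exact hz₀ ((hKL.2.2.1 z₀ u).eq_zero_of_invert_eq hfix)
  by_contra hP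
  have hz : z ∈ c.support := Finsupp.mem_support_iff.mpr (by rwa [hcP z hzu])
  obtain ⟨z₀, hz₀, hmax⟩ := c.support.exists_max_image cs.length ⟨z, hz⟩
  obtain rfl := hmax_eq z₀ hz₀ hmax
  exact hzu (hmax_eq z hz fun y hy => (hmax y hy).trans hle)

lemma Cb_sub_mem_lowerSpan [Nonempty B₀] (hmul : HeckeMul cs Tb L) (hbar : IsBar Tb bar)
    (hKL : IsKL Tb Cb P bar) (u : W) :
    Cb u - (1 + P u u) • Tb u ∈ lowerSpan cs Tb (cs.length u) := by
  refine mem_lowerSpan_iff.mpr fun z hz => ?_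
  rw [map_sub, map_smul, Finsupp.sub_apply, Finsupp.smul_apply, hKL.2.1 u,
    Tb.repr_self_add_finsum_smul u (hKL.1 u), Tb.repr_self]
  rcases eq_or_ne z u with rfl | hzu
  · simp
  · simp [Finsupp.single_eq_of_ne hzu, P_eq_zero_of_length_le hmul hbar hKL hzu hz]

lemma Tb_mul_Cb_sub_mem_lowerSpan [Nonempty B₀] (hmul : HeckeMul cs Tb L) (hbar : IsBar Tb bar)
    (hKL : IsKL Tb Cb P bar) {x u : W} (hxu : cs.length (x * u) = cs.length x + cs.length u) :
    Tb x * Cb u - (1 + P u u) • Tb (x * u) ∈ lowerSpan cs Tb (cs.length (x * u)) := by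
  rw [← Tb_mul_Tb hmul hbar hxu, ← mul_smul_comm, ← mul_sub, hxu, add_comm]
  exact Tb_mul_mem_lowerSpan hmul hbar x (Cb_sub_mem_lowerSpan hmul hbar hKL u)

lemma exists_Tb_mul_Cb_sub_smul_mem_lowerSpan (hmul : HeckeMul cs Tb L) (hbar : IsBar Tb bar)
    (hKL : IsKL Tb Cb P bar) {x u : W} (hxu : cs.length (x * u) = cs.length x + cs.length u) :
    ∃ c : 𝒜, c ≠ 0 ∧ Tb x * Cb u - c • Tb (x * u) ∈ lowerSpan cs Tb (cs.length (x * u)) := by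
  rcases isEmpty_or_nonempty B₀ with hB | hB
  · -- `W` is trivial here, and `Tb 1` need not be `1`.
    have hsingle : ∀ h : H, h = Tb.repr h (x * u) • Tb (x * u) := fun h =>
      Tb.ext_elem fun z => by
        obtain rfl : z = x * u := (cs.eq_one_of_isEmpty z).trans (cs.eq_one_of_isEmpty _).symm
        simp
    refine ⟨Tb.repr (Tb x * Cb u) (x * u), fun h0 => Cb.ne_zero u ?_, ?_⟩
    · apply isLeftRegular_Tb hbar x
      change Tb x * Cb u = Tb x * 0
      rw [mul_zero, hsingle (Tb x * Cb u), h0, zero_smul]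
    · rw [← hsingle, sub_self]
      exact zero_mem _
  · exact ⟨_, (hKL.2.2.1 u u).one_add_ne_zero, Tb_mul_Cb_sub_mem_lowerSpan hmul hbar hKL hxu⟩

end Hecke

theorem stmt11_general (cs : CoxeterSystem M W) (L : W → ℕ) (Tb Cb : Module.Basis W 𝒜 H)
    (P : W → W → 𝒜) (bar : H → H)
    (hmul : HeckeMul cs Tb L)
    (hbar : IsBar Tb bar) (hKL : IsKL Tb Cb P bar)
    (U : Set W) (X : W → Set W)
    (hI2 : ∀ u ∈ U, ∀ x ∈ X u, cs.length (x * u) = cs.length x + cs.length u)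
    (hI3 : ∀ u ∈ U, ∀ v ∈ U, u ≠ v → ∀ x ∈ X u, ∀ y ∈ X v, x * u ≠ y * v) :
    ∀ Mid : Submodule 𝒜 H,
      Mid = Submodule.span 𝒜 {z : H | ∃ u ∈ U, ∃ x ∈ X u, z = Tb x * Cb u} →
      (∀ z ∈ Mid, ∀ a : H, a * z ∈ Mid) →  -- I4
      ∃ b : Module.Basis {p : W × W // p.2 ∈ U ∧ p.1 ∈ X p.2} 𝒜 ↥Mid,
        ∀ p, (b p : H) = Tb p.1.1 * Cb p.1.2 := by
  rintro Mid rfl -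
  let f : {p : W × W // p.2 ∈ U ∧ p.1 ∈ X p.2} → H := fun p => Tb p.1.1 * Cb p.1.2
  have hrange : Set.range f = {z : H | ∃ u ∈ U, ∃ x ∈ X u, z = Tb x * Cb u} := by
    ext z
    constructor
    · rintro ⟨⟨⟨x, u⟩, hu, hx⟩, rfl⟩
      exact ⟨u, hu, x, hx, rfl⟩
    · rintro ⟨u, hu, x, hx, rfl⟩
      exact ⟨⟨(x, u), hu, hx⟩, rfl⟩
  have hinj :
      Function.Injective fun p : {p : W × W // p.2 ∈ U ∧ p.1 ∈ X p.2} => p.1.1 * p.1.2 := by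
    rintro ⟨⟨x, u⟩, hu, hx⟩ ⟨⟨y, v⟩, hv, hy⟩ (h : x * u = y * v)
    obtain rfl : u = v := by_contra fun huv => hI3 u hu v hv huv x hx y hy h
    obtain rfl : x = y := mul_right_cancel h
    rfl
  have hli : LinearIndependent 𝒜 f := Tb.linearIndependent_of_triangular cs.length hinj
    fun p => exists_Tb_mul_Cb_sub_smul_mem_lowerSpan hmul hbar hKL (hI2 _ p.2.1 _ p.2.2)
  exact ⟨(Module.Basis.span hli).map (LinearEquiv.ofEq _ _ (congrArg _ hrange)),
    fun p => by simp [Module.Basis.span_apply, f]⟩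

/-- under conditions I1–I4, the set `{T_x C_u | u ∈ U, x ∈ X_u}` is an
`𝒜`-basis of the left ideal `M = ⟨T_x C_u | u ∈ U, x ∈ X_u⟩_𝒜`. -/
theorem stmt11 (cs : CoxeterSystem M W) (L : W → ℕ) (Tb Cb : Module.Basis W 𝒜 H)
    (P : W → W → 𝒜) (bar : H → H)
    (hw : IsWeight cs L) (hmul : HeckeMul cs Tb L)
    (hbar : IsBar Tb bar) (hKL : IsKL Tb Cb P bar)
    (U : Set W) (X : W → Set W)
    (hI1 : ∀ u ∈ U, (1 : W) ∈ X u)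
    (hI2 : ∀ u ∈ U, ∀ x ∈ X u, cs.length (x * u) = cs.length x + cs.length u)
    (hI3 : ∀ u ∈ U, ∀ v ∈ U, u ≠ v → ∀ x ∈ X u, ∀ y ∈ X v, x * u ≠ y * v) :
    ∀ Mid : Submodule 𝒜 H,
      Mid = Submodule.span 𝒜 {z : H | ∃ u ∈ U, ∃ x ∈ X u, z = Tb x * Cb u} →
      (∀ z ∈ Mid, ∀ a : H, a * z ∈ Mid) →  -- I4
      ∃ b : Module.Basis {p : W × W // p.2 ∈ U ∧ p.1 ∈ X p.2} 𝒜 ↥Mid,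
        ∀ p, (b p : H) = Tb p.1.1 * Cb p.1.2 :=
  stmt11_general cs L Tb Cb P bar hmul hbar hKL U X hI2 hI3
end
end
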